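/- arXiv:1603.07718 — 4 statements merged into one kernel-verified Lean document; each statement's English description precedes it below -/
import Mathlib

section
/- Let L/k be a Galois field extension of degree 4 whose Galois group is cyclic, and let K be the unique intermediate field with [K:k] = 2. Then the norm map N : (L ⊗_k L)ˣ → (K ⊗_k L)ˣ of the finite free (K ⊗_k L)-algebra L ⊗_k L is surjective. -/
/-!
For a finite Galois extension `L/k` and any intermediate field `K`, evaluation at the
`k`-embeddings identifies `K ⊗[k] L` with `L ^ Hom_k(K, L)` and `L ⊗[k] L` with `L ^ Hom_k(L, L)`:
the maps are onto by Dedekind's independence of characters, hence bijective by counting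
dimensions. Fixing for every `φ : K →ₐ[k] L` an extension `φ̃` to `L`, each `k`-endomorphism of `L`
is uniquely `φ̃ ∘ h` with `h ∈ Gal(L/K)`, and this makes `L ⊗[k] L ≅ (K ⊗[k] L) ^ Gal(L/K)` as
`K ⊗[k] L`-algebras. The norm of a split algebra `R ^ n` is the product of the coordinates, so
`(y, 1, …, 1)` has norm `y`.
-/

open TensorProduct Module

theorem Algebra.norm_pi {R ι : Type*} [CommRing R] [Fintype ι] (x : ι → R) :
    Algebra.norm R x = ∏ i, x i := by
  classical
  rw [Algebra.norm_eq_matrix_det (Pi.basisFun R ι), ← Matrix.det_diagonal]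
  congr 1
  ext i j
  simp [Algebra.leftMulMatrix_apply, Matrix.diagonal_apply, Pi.single_apply]

theorem Algebra.exists_norm_eq_of_algEquiv_pi {R S ι : Type*} [CommRing R] [Ring S]
    [Algebra R S] [Finite ι] [Nonempty ι] (e : S ≃ₐ[R] (ι → R)) (y : Rˣ) :
    ∃ x : Sˣ, Algebra.norm R (x : S) = y := by
  classical
  have := Fintype.ofFinite ι
  obtain ⟨i⟩ := ‹Nonempty ι›
  have hu : IsUnit (Pi.mulSingle (M := fun _ => R) i (y : R)) :=
    y.isUnit.map (MonoidHom.mulSingle (fun _ => R) i)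
  refine ⟨(hu.map e.symm).unit, ?_⟩
  rw [IsUnit.unit_spec, ← Algebra.norm_eq_of_algEquiv e, e.apply_symm_apply, Algebra.norm_pi,
    Finset.prod_pi_mulSingle', if_pos (Finset.mem_univ i)]

theorem Submodule.span_range_eval_eq_top {X ι L : Type*} [Field L] [Finite ι] {f : ι → X → L}
    (hf : LinearIndependent L f) : Submodule.span L (Set.range fun x i => f i x) = ⊤ := by
  classical
  have := Fintype.ofFinite ι
  by_contra hne
  obtain ⟨ℓ, hℓ, hker⟩ := Submodule.exists_dual_map_eq_bot_of_lt_top (lt_top_iff_ne_top.2 hne)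
    inferInstance
  have hℓ_apply (v : ι → L) : ℓ v = ∑ i, ℓ (Pi.single i 1) * v i := by
    rw [LinearMap.pi_apply_eq_sum_univ]
    refine Finset.sum_congr rfl fun i _ => ?_
    rw [smul_eq_mul, mul_comm]
    congr 2
    funext j
    simp [Pi.single_apply, eq_comm]
  have hrel : ∑ i, ℓ (Pi.single i 1) • f i = 0 := by
    funext x
    have hx := Submodule.mem_map_of_mem (f := ℓ)
      (Submodule.subset_span (Set.mem_range_self (f := fun x i => f i x) x))
    rw [hker, Submodule.mem_bot, hℓ_apply] at hx
    simpa using hx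
  refine hℓ ((Pi.basisFun L ι).ext fun i => ?_)
  simpa using Fintype.linearIndependent_iff.1 hf _ hrel i

namespace Algebra.TensorProduct

variable {k A L ι : Type*} [Field k] [CommRing A] [Algebra k A] [Field L] [Algebra k L]

noncomputable def toPi (φ : ι → A →ₐ[k] L) : A ⊗[k] L →ₐ[k] (ι → L) :=
  productMap (AlgHom.pi φ) ((Algebra.ofId L (ι → L)).restrictScalars k)

@[simp]
theorem toPi_tmul (φ : ι → A →ₐ[k] L) (a : A) (b : L) : toPi φ (a ⊗ₜ b) = fun i => φ i a * b :=
  rfl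

theorem toPi_surjective [Finite ι] {φ : ι → A →ₐ[k] L} (hφ : Function.Injective φ) :
    Function.Surjective (toPi φ) := by
  have hli : LinearIndependent L fun i => ⇑(φ i) :=
    (linearIndependent_monoidHom A L).comp (fun i => (φ i : A →* L))
      fun i j hij => hφ (AlgHom.ext fun a => DFunLike.congr_fun hij a)
  intro v
  have hv : v ∈ Submodule.span L (Set.range fun a i => φ i a) := by
    rw [Submodule.span_range_eval_eq_top hli]
    trivial
  induction hv using Submodule.span_induction with
  | mem _ h =>
    obtain ⟨a, rfl⟩ := h
    exact ⟨a ⊗ₜ 1, by simp⟩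
  | zero => exact ⟨0, map_zero _⟩
  | add _ _ _ _ h₁ h₂ =>
    obtain ⟨t₁, rfl⟩ := h₁
    obtain ⟨t₂, rfl⟩ := h₂
    exact ⟨t₁ + t₂, map_add _ _ _⟩
  | smul c _ _ h =>
    obtain ⟨t, rfl⟩ := h
    refine ⟨(1 ⊗ₜ c) * t, ?_⟩
    ext i
    simp [mul_comm]

theorem toPi_bijective [Finite ι] [FiniteDimensional k A] [FiniteDimensional k L]
    {φ : ι → A →ₐ[k] L} (hφ : Function.Injective φ) (hcard : Nat.card ι = finrank k A) :
    Function.Bijective (toPi φ) := by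
  have := Fintype.ofFinite ι
  have hrank : finrank k (A ⊗[k] L) = finrank k (ι → L) := by
    rw [finrank_tensorProduct, finrank_pi_fintype, Finset.sum_const, Finset.card_univ,
      ← Nat.card_eq_fintype_card, hcard, smul_eq_mul]
  have hsurj := toPi_surjective hφ
  exact ⟨(LinearMap.injective_iff_surjective_of_finrank_eq_finrank hrank
    (f := (toPi φ).toLinearMap)).2 hsurj, hsurj⟩

end Algebra.TensorProduct

def RingEquiv.curry (α β R : Type*) [NonUnitalNonAssocSemiring R] :
    (α × β → R) ≃+* (α → β → R) :=
  { Equiv.curry α β R with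
    map_mul' := fun _ _ => rfl
    map_add' := fun _ _ => rfl }

section Embeddings

variable (k K L : Type*) [Field k] [Field K] [Field L] [Algebra k K] [Algebra k L] [Algebra K L]
  [IsScalarTower k K L]

noncomputable def liftNormalComp [Normal k L] (p : (L ≃ₐ[K] L) × (K →ₐ[k] L)) : L →ₐ[k] L :=
  (p.2.liftNormal L).comp ((p.1 : L →ₐ[K] L).restrictScalars k)

variable {k K L}

@[simp]
theorem liftNormalComp_algebraMap [Normal k L] (p : (L ≃ₐ[K] L) × (K →ₐ[k] L)) (c : K) :
    liftNormalComp k K L p (algebraMap K L c) = p.2 c := by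
  simp [liftNormalComp]

theorem liftNormalComp_injective [Normal k L] : Function.Injective (liftNormalComp k K L) := by
  rintro ⟨h, φ⟩ ⟨h', φ'⟩ heq
  have hφ : φ = φ' := AlgHom.ext fun c => by
    simpa using DFunLike.congr_fun heq (algebraMap K L c)
  subst hφ
  exact Prod.ext (AlgEquiv.ext fun x => (φ.liftNormal L).injective (DFunLike.congr_fun heq x)) rfl

theorem natCard_algHom_of_isGalois [IsGalois k L] [FiniteDimensional k L] :
    Nat.card (K →ₐ[k] L) = finrank k K := by
  have : FiniteDimensional k K := .left k K L
  have : Algebra.IsSeparable k K := Algebra.isSeparable_tower_bot_of_isSeparable k K L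
  exact AlgHom.natCard_of_splits k K L fun x => by
    simpa [minpoly.algebraMap_eq (algebraMap K L).injective] using
      Normal.splits (inferInstance : Normal k L) (algebraMap K L x)

theorem natCard_gal_prod_algHom [IsGalois k L] [FiniteDimensional k L] :
    Nat.card ((L ≃ₐ[K] L) × (K →ₐ[k] L)) = finrank k L := by
  have : FiniteDimensional K L := .right k K L
  have : IsGalois K L := .tower_top_of_isGalois k K L
  rw [Nat.card_prod, IsGalois.card_aut_eq_finrank, natCard_algHom_of_isGalois, mul_comm,
    finrank_mul_finrank]

end Embeddings

section Split

variable (k K L : Type*) [Field k] [Field K] [Field L] [Algebra k K] [Algebra k L] [Algebra K L]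
  [IsScalarTower k K L]

noncomputable abbrev tensorSelfAlgebra : Algebra (K ⊗[k] L) (L ⊗[k] L) :=
  ((Algebra.TensorProduct.map (IsScalarTower.toAlgHom k K L) (AlgHom.id k L)).toRingHom).toAlgebra

attribute [local instance] tensorSelfAlgebra

theorem toPi_liftNormalComp_algebraMap [Normal k L] (z : K ⊗[k] L)
    (p : (L ≃ₐ[K] L) × (K →ₐ[k] L)) :
    Algebra.TensorProduct.toPi (liftNormalComp k K L) (algebraMap (K ⊗[k] L) (L ⊗[k] L) z) p =
      Algebra.TensorProduct.toPi (fun φ : K →ₐ[k] L => φ) z p.2 := by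
  induction z using TensorProduct.induction_on with
  | zero => simp
  | tmul c b =>
    change Algebra.TensorProduct.toPi _ (algebraMap K L c ⊗ₜ b) p = _
    simp
  | add z₁ z₂ h₁ h₂ => simp only [map_add, Pi.add_apply, h₁, h₂]

variable [IsGalois k L] [FiniteDimensional k L]

noncomputable def tensorSelfEquivPi : L ⊗[k] L ≃ₐ[K ⊗[k] L] ((L ≃ₐ[K] L) → K ⊗[k] L) :=
  have : FiniteDimensional k K := .left k K L
  have : FiniteDimensional K L := .right k K L
  let ΨK := AlgEquiv.ofBijective _ <| Algebra.TensorProduct.toPi_bijective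
    (φ := fun φ : K →ₐ[k] L => φ) Function.injective_id natCard_algHom_of_isGalois
  let ΦL := AlgEquiv.ofBijective _ <| Algebra.TensorProduct.toPi_bijective
    liftNormalComp_injective natCard_gal_prod_algHom
  AlgEquiv.ofRingEquiv (f := ΦL.toRingEquiv.trans ((RingEquiv.curry _ _ L).trans
      (RingEquiv.piCongrRight fun _ => ΨK.symm.toRingEquiv))) fun z => by
    funext h
    change ΨK.symm (fun φ => ΦL (algebraMap _ _ z) (h, φ)) = z
    rw [AlgEquiv.symm_apply_eq]
    funext φ
    exact toPi_liftNormalComp_algebraMap k K L z (h, φ)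

theorem exists_norm_tensorSelf_eq (y : (K ⊗[k] L)ˣ) :
    ∃ x : (L ⊗[k] L)ˣ, Algebra.norm (K ⊗[k] L) (x : L ⊗[k] L) = y :=
  have : FiniteDimensional K L := .right k K L
  Algebra.exists_norm_eq_of_algEquiv_pi (tensorSelfEquivPi k K L) y

end Split

theorem stmt2_general (k K L : Type) [Field k] [Field K] [Field L]
    [Algebra k K] [Algebra k L] [Algebra K L] [IsScalarTower k K L]
    [IsGalois k L] (hdeg : Module.finrank k L = 4) :
    letI : Algebra (K ⊗[k] L) (L ⊗[k] L) :=
      ((Algebra.TensorProduct.map (IsScalarTower.toAlgHom k K L)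
        (AlgHom.id k L)).toRingHom).toAlgebra
    ∀ y : (K ⊗[k] L)ˣ, ∃ x : (L ⊗[k] L)ˣ,
      Algebra.norm (K ⊗[k] L) (x : L ⊗[k] L) = (y : K ⊗[k] L) := by
  have : FiniteDimensional k L := .of_finrank_pos (by omega)
  exact exists_norm_tensorSelf_eq k K L

theorem stmt2 (k K L : Type) [Field k] [Field K] [Field L]
    [Algebra k K] [Algebra k L] [Algebra K L] [IsScalarTower k K L]
    [IsGalois k L] (hdeg : Module.finrank k L = 4)
    [IsCyclic (L ≃ₐ[k] L)]
    (hK : Module.finrank k K = 2) :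
    letI : Algebra (K ⊗[k] L) (L ⊗[k] L) :=
      ((Algebra.TensorProduct.map (IsScalarTower.toAlgHom k K L)
        (AlgHom.id k L)).toRingHom).toAlgebra
    ∀ y : (K ⊗[k] L)ˣ, ∃ x : (L ⊗[k] L)ˣ,
      Algebra.norm (K ⊗[k] L) (x : L ⊗[k] L) = (y : K ⊗[k] L) :=
  stmt2_general k K L hdeg
end

section
/- Let L/k be a finite separable field extension of degree d and let β ∈ kˣ. Suppose there exists a finite separable field extension F/k with gcd([F:k], d) = 1 such that β = N_{(L⊗_kF)/F}(x) for some unit x of L ⊗_k F. Then β ∈ N_{L/k}(Lˣ). -/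
open TensorProduct

section DetOneAdd
variable {K : Type*} [Field K] {m : Type*} [Fintype m] [DecidableEq m]

lemma det_one_add_of_sq_eq_zero (N : Matrix m m K) (h : N * N = 0) :
    Matrix.det (1 + N) = 1 := by
  have hnil : IsNilpotent N := ⟨2, by rwa [pow_two]⟩
  have hc : N.charpoly = Polynomial.X ^ (Fintype.card m) := by
    rw [← sub_eq_zero]
    exact (Matrix.isNilpotent_charpoly_sub_pow_of_isNilpotent hnil).eq_zero
  have heval : (N.charpoly).eval (-1 : K) = ((Matrix.charmatrix N).map (Polynomial.evalRingHom (-1 : K))).det := by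
    rw [Matrix.charpoly]
    exact RingHom.map_det (Polynomial.evalRingHom (-1 : K)) _
  have hmap : (Matrix.charmatrix N).map (Polynomial.evalRingHom (-1 : K)) = -(1 + N) := by
    ext i j
    by_cases hij : i = j
    · subst hij
      simp only [Matrix.map_apply, Matrix.charmatrix_apply_eq, Polynomial.eval_sub,
        Polynomial.coe_evalRingHom, Polynomial.eval_X, Polynomial.eval_C,
        Matrix.neg_apply, Matrix.add_apply, Matrix.one_apply_eq]
      ring
    · simp [Matrix.charmatrix_apply_ne _ _ _ hij, Matrix.one_apply_ne hij]
  rw [hmap, hc] at heval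
  rw [Matrix.det_neg] at heval
  have hl : Polynomial.eval (-1 : K) (Polynomial.X ^ Fintype.card m) = (-1 : K) ^ Fintype.card m := by
    simp
  rw [hl] at heval
  have hne : ((-1 : K) ^ Fintype.card m) ≠ 0 := pow_ne_zero _ (neg_ne_zero.mpr one_ne_zero)
  exact (mul_left_cancel₀ hne (by rw [← heval, mul_one])).symm

end DetOneAdd

section Aux
variable (K L : Type*) [Field K] [Field L] [Algebra K L] [FiniteDimensional K L]

lemma det_restrictScalars_toLin' (ι : Type*) [Fintype ι] [DecidableEq ι] (M : Matrix ι ι L) :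
    LinearMap.det (LinearMap.restrictScalars K (Matrix.toLin' M)) = Algebra.norm K M.det := by
  classical
  set c := Module.finBasis K L with hc
  set pb := Pi.basis (fun _ : ι => c) with hpb
  set Ψ : Matrix ι ι L → Matrix (Σ _ : ι, Fin (Module.finrank K L))
      (Σ _ : ι, Fin (Module.finrank K L)) K :=
    fun A => LinearMap.toMatrix pb pb (LinearMap.restrictScalars K (Matrix.toLin' A)) with hΨ
  suffices hS : (Ψ M).det = Algebra.norm K M.det by
    rw [← LinearMap.det_toMatrix pb]
    exact hS
  have hmul : ∀ A B : Matrix ι ι L, Ψ (A * B) = Ψ A * Ψ B := by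
    intro A B
    rw [hΨ]
    simp only
    rw [show Matrix.toLin' (A * B) = (Matrix.toLin' A).comp (Matrix.toLin' B) from
      Matrix.toLin'_mul A B]
    rw [show LinearMap.restrictScalars K ((Matrix.toLin' A).comp (Matrix.toLin' B)) =
      (LinearMap.restrictScalars K (Matrix.toLin' A)).comp
        (LinearMap.restrictScalars K (Matrix.toLin' B)) from rfl]
    rw [LinearMap.toMatrix_comp pb pb pb]
  have h1 : Ψ 1 = 1 := by
    rw [hΨ]
    simp only
    rw [Matrix.toLin'_one,
      show LinearMap.restrictScalars K (LinearMap.id : (ι → L) →ₗ[L] (ι → L)) = LinearMap.id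
        from rfl, LinearMap.toMatrix_id]
  have hadd : ∀ A B : Matrix ι ι L, Ψ (A + B) = Ψ A + Ψ B := by
    intro A B
    rw [hΨ]
    simp only
    rw [map_add]
    rw [show LinearMap.restrictScalars K (Matrix.toLin' A + Matrix.toLin' B) =
      LinearMap.restrictScalars K (Matrix.toLin' A) +
        LinearMap.restrictScalars K (Matrix.toLin' B) from rfl, map_add]
  have h0 : Ψ 0 = 0 := by
    rw [hΨ]
    simp only
    rw [map_zero]
    rw [show LinearMap.restrictScalars K (0 : (ι → L) →ₗ[L] (ι → L)) = 0 from rfl, map_zero]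
  induction M using Matrix.diagonal_transvection_induction with
  | hdiag D hD =>
    let e : (Σ _ : ι, Fin (Module.finrank K L)) ≃ (Fin (Module.finrank K L)) × ι :=
      ⟨fun p => (p.2, p.1), fun q => ⟨q.2, q.1⟩, fun _ => rfl, fun _ => rfl⟩
    have hform : Ψ (Matrix.diagonal D) =
        (Matrix.blockDiagonal fun i : ι => Algebra.leftMulMatrix c (D i)).submatrix ⇑e ⇑e := by
      ext ⟨i, a⟩ ⟨j, b⟩
      rw [hΨ]
      simp only
      rw [LinearMap.toMatrix_apply]
      rw [show (LinearMap.restrictScalars K (Matrix.toLin' (Matrix.diagonal D))) (pb ⟨j, b⟩)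
        = (Matrix.diagonal D).mulVec (pb ⟨j, b⟩) from rfl]
      rw [hpb, Pi.basis_repr]
      rw [Matrix.mulVec_diagonal]
      rw [Pi.basis_apply]
      simp only [Matrix.submatrix_apply, Equiv.coe_fn_mk, Matrix.blockDiagonal_apply, e]
      rw [Pi.single_apply]
      by_cases hij : i = j
      · subst hij
        simp [Algebra.leftMulMatrix_eq_repr_mul]
      · rw [if_neg hij, if_neg hij, mul_zero, map_zero]
        simp
    rw [hform, Matrix.det_submatrix_equiv_self e, Matrix.det_blockDiagonal,
      Matrix.det_diagonal, map_prod]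
    exact Finset.prod_congr rfl fun i _ => (Algebra.norm_eq_matrix_det c (D i)).symm
  | htransvec t =>
    obtain ⟨i, j, hij, cc⟩ := t
    have ht : (Matrix.TransvectionStruct.mk i j hij cc).toMatrix
        = 1 + Matrix.single i j cc := rfl
    rw [ht, hadd, h1]
    have hsq : Ψ (Matrix.single i j cc) * Ψ (Matrix.single i j cc) = 0 := by
      rw [← hmul, Matrix.single_mul_single_of_ne (h := Ne.symm hij), h0]
    rw [det_one_add_of_sq_eq_zero _ hsq, ← ht, Matrix.TransvectionStruct.det, map_one]
  | hmul A B hA hB =>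
    rw [hmul, Matrix.det_mul, Matrix.det_mul, hA, hB, map_mul]

end Aux

lemma det_restrictScalars' (K L V : Type*) [Field K] [Field L] [Algebra K L]
    [FiniteDimensional K L] [AddCommGroup V] [Module K V] [Module L V]
    [IsScalarTower K L V] [FiniteDimensional L V] (f : V →ₗ[L] V) :
    LinearMap.det (LinearMap.restrictScalars K f) = Algebra.norm K (LinearMap.det f) := by
  classical
  let b := Module.finBasis L V
  let e : V ≃ₗ[L] (Fin (Module.finrank L V) → L) := b.equivFun
  have h₁ : LinearMap.det f = LinearMap.det (e.conj f) := (LinearMap.det_conj f e).symm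
  have h₂ : LinearMap.restrictScalars K (e.conj f) =
      (e.restrictScalars K).conj (LinearMap.restrictScalars K f) := by
    ext v
    rfl
  have h₃ : LinearMap.det (LinearMap.restrictScalars K f) =
      LinearMap.det (LinearMap.restrictScalars K (e.conj f)) := by
    rw [h₂]
    exact (LinearMap.det_conj (LinearMap.restrictScalars K f) (e.restrictScalars K)).symm
  rw [h₃, h₁]
  have h₄ : e.conj f = Matrix.toLin' (LinearMap.toMatrix' (e.conj f)) :=
    (Matrix.toLin'_toMatrix' (e.conj f)).symm
  rw [h₄, det_restrictScalars_toLin' K L _ (LinearMap.toMatrix' (e.conj f)), ← h₄,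
    LinearMap.det_toMatrix']

lemma norm_tower (K L A : Type*) [Field K] [Field L] [Algebra K L] [FiniteDimensional K L]
    [Ring A] [Algebra L A] [Algebra K A] [IsScalarTower K L A] [Module.Finite L A] (x : A) :
    Algebra.norm K (Algebra.norm L x) = Algebra.norm K x := by
  have h0 : (Algebra.lmul K A) x = LinearMap.restrictScalars K ((Algebra.lmul L A) x) :=
    LinearMap.ext fun y => rfl
  calc Algebra.norm K (Algebra.norm L x)
      = Algebra.norm K (LinearMap.det ((Algebra.lmul L A) x)) := by
        rw [show Algebra.norm L x = LinearMap.det ((Algebra.lmul L A) x) from rfl]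
    _ = LinearMap.det (LinearMap.restrictScalars K ((Algebra.lmul L A) x)) :=
        (det_restrictScalars' K L A _).symm
    _ = LinearMap.det ((Algebra.lmul K A) x) := by rw [h0]
    _ = Algebra.norm K x := (Algebra.norm_apply _ _).symm

/-- `β ∈ k` is a norm from `(L ⊗[k] F)ˣ` to `Fˣ`, where `L ⊗[k] F` is regarded as an
`F`-algebra via the right tensor factor. -/
def IsBaseNorm (k L F : Type) [Field k] [Field L] [Field F]
    [Algebra k L] [Algebra k F] (β : k) : Prop :=
  letI : Algebra F (L ⊗[k] F) :=
    (Algebra.TensorProduct.includeRight (R := k) (A := L) (B := F)).toRingHom.toAlgebra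
  ∃ x : (L ⊗[k] F)ˣ, Algebra.norm F (x : L ⊗[k] F) = algebraMap k F β

theorem stmt10 (k L : Type) [Field k] [Field L] [Algebra k L]
    [FiniteDimensional k L] [Algebra.IsSeparable k L]
    (d : ℕ) (hd : Module.finrank k L = d) (β : kˣ)
    (F : Type) [Field F] [Algebra k F]
    [FiniteDimensional k F] [Algebra.IsSeparable k F]
    (hcop : Nat.gcd (Module.finrank k F) d = 1)
    (h : IsBaseNorm k L F (β : k)) :
    ∃ x : Lˣ, Algebra.norm k (x : L) = (β : k) := by
  classical
  letI : Algebra F (L ⊗[k] F) :=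
    (Algebra.TensorProduct.includeRight (R := k) (A := L) (B := F)).toRingHom.toAlgebra
  haveI : IsScalarTower k F (L ⊗[k] F) := IsScalarTower.of_algebraMap_eq fun r => by
    rw [RingHom.algebraMap_toAlgebra]
    show algebraMap k (L ⊗[k] F) r = Algebra.TensorProduct.includeRight (algebraMap k F r)
    rw [Algebra.TensorProduct.algebraMap_apply, Algebra.TensorProduct.includeRight_apply,
      Algebra.algebraMap_eq_smul_one, Algebra.algebraMap_eq_smul_one (A := F),
      TensorProduct.smul_tmul]
  haveI : Module.Finite k (L ⊗[k] F) := inferInstance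
  haveI : Module.Finite F (L ⊗[k] F) := Module.Finite.of_restrictScalars_finite k F (L ⊗[k] F)
  haveI : Module.Finite L (L ⊗[k] F) := Module.Finite.of_restrictScalars_finite k L (L ⊗[k] F)
  obtain ⟨x, hx⟩ := h
  set m := Module.finrank k F with hm
  have e1 : Algebra.norm k (Algebra.norm F (x : L ⊗[k] F)) = Algebra.norm k (x : L ⊗[k] F) :=
    norm_tower k F (L ⊗[k] F) _
  have e2 : Algebra.norm k (Algebra.norm L (x : L ⊗[k] F)) = Algebra.norm k (x : L ⊗[k] F) :=
    norm_tower k L (L ⊗[k] F) _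
  have e3 : Algebra.norm k (Algebra.norm F (x : L ⊗[k] F)) = (β : k) ^ m := by
    rw [hx, Algebra.norm_algebraMap]
  let Nk : Lˣ →* kˣ := Units.map (Algebra.norm k : L →* k)
  let z : Lˣ := Units.map (Algebra.norm L : (L ⊗[k] F) →* L) x
  have hz : Nk z = β ^ m := by
    ext
    show Algebra.norm k (Algebra.norm L (x : L ⊗[k] F)) = ((β ^ m : kˣ) : k)
    rw [e2, ← e1, e3, Units.val_pow_eq_pow_val]
  let w : Lˣ := Units.map (algebraMap k L : k →+* L).toMonoidHom β
  have hw : Nk w = β ^ d := by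
    ext
    show Algebra.norm k (algebraMap k L (β : k)) = ((β ^ d : kˣ) : k)
    rw [Algebra.norm_algebraMap, hd, Units.val_pow_eq_pow_val]
  set a := Nat.gcdA m d with ha
  set b := Nat.gcdB m d with hb
  refine ⟨z ^ a * w ^ b, ?_⟩
  have key : Nk (z ^ a * w ^ b) = β := by
    rw [map_mul, map_zpow, map_zpow, hz, hw]
    have hbez : (1 : ℤ) = m * a + d * b := by
      rw [ha, hb, ← Nat.gcd_eq_gcd_ab m d, hcop]
      norm_num
    calc (β ^ m) ^ a * (β ^ d) ^ b
        = β ^ ((m : ℤ) * a) * β ^ ((d : ℤ) * b) := by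
          rw [← zpow_natCast β m, ← zpow_natCast β d, ← zpow_mul, ← zpow_mul]
      _ = β ^ ((m : ℤ) * a + (d : ℤ) * b) := (zpow_add β _ _).symm
      _ = β ^ (1 : ℤ) := by rw [← hbez]
      _ = β := zpow_one β
  calc Algebra.norm k ((z ^ a * w ^ b : Lˣ) : L) = ((Nk (z ^ a * w ^ b) : kˣ) : k) := rfl
    _ = (β : k) := by rw [key]
end

section
/- Let L/k be a finite separable field extension of prime degree p and let β ∈ kˣ. Then there exists a finite separable field extension F/k with [F:k] ∈ {1, p} such that (i) β = N_{(L⊗_kF)/F}(x) for some unit x of L ⊗_k F, and (ii) for every finite separable field extension F'/k with β = N_{(L⊗_kF')/F'}(x') for some unit x' of L ⊗_k F', the degree [F:k] divides [F':k]. -/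
open TensorProduct

/-!
If `β` is a norm from `L`, take `F = k`. Otherwise take `F = L`: since `L/k` is separable,
`L ⊗[k] L ≃ L × T` as `L`-algebras (the diagonal splits off), so every unit `c` of `L` is the
norm of the element corresponding to `(c, 1)`. For minimality, a norm over `F'` of `β` gives,
by transitivity of norms through `F'` and through `L`, the element `β ^ [F' : k]` as a norm
from `L`; so is `β ^ p`, and if `p ∤ [F' : k]` Bézout makes `β` itself a norm from `L`.
-/

open Module

universe u

theorem Algebra.norm_prodMk {R A B : Type*} [CommRing R] [CommRing A] [CommRing B]
    [Algebra R A] [Algebra R B] [Module.Free R A] [Module.Free R B]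
    [Module.Finite R A] [Module.Finite R B] (a : A) (b : B) :
    Algebra.norm R (a, b) = Algebra.norm R a * Algebra.norm R b := by
  rw [Algebra.norm_apply, Algebra.norm_apply, Algebra.norm_apply, ← LinearMap.det_prodMap]
  congr 1

theorem exists_norm_eq_of_algEquiv_prod {F S T : Type*} [Field F] [CommRing S] [CommRing T]
    [Algebra F S] [Algebra F T] [Module.Finite F S] (e : S ≃ₐ[F] F × T) (c : Fˣ) :
    ∃ x : Sˣ, Algebra.norm F (x : S) = c := by
  have : Module.Finite F T :=
    .of_surjective ((LinearMap.snd F F T).comp e.toLinearMap)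
      (Prod.snd_surjective.comp e.surjective)
  refine ⟨Units.map e.symm.toMonoidHom (Units.map (MonoidHom.inl F T) c), ?_⟩
  change Algebra.norm F (e.symm (c, 1)) = c
  rw [Algebra.norm_eq_of_algEquiv, Algebra.norm_prodMk]
  simp

theorem exists_norm_tensorProduct_self_eq {k L : Type u} [Field k] [Field L] [Algebra k L]
    [FiniteDimensional k L] [Algebra.IsSeparable k L] (c : Lˣ) :
    ∃ x : (L ⊗[k] L)ˣ, Algebra.norm L (x : L ⊗[k] L) = c := by
  have : Algebra.FormallyUnramified k L := .of_isSeparable k L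
  obtain ⟨T, _, _, ⟨e⟩⟩ := Algebra.FormallyUnramified.exists_algEquiv_prod k L
  exact exists_norm_eq_of_algEquiv_prod e c

theorem Subgroup.mem_of_pow_mem_of_coprime {G : Type*} [Group G] (H : Subgroup G) {g : G}
    {m n : ℕ} (hmn : m.Coprime n) (hm : g ^ m ∈ H) (hn : g ^ n ∈ H) : g ∈ H := by
  have hg : g = (g ^ m) ^ m.gcdA n * (g ^ n) ^ m.gcdB n := by
    rw [← zpow_natCast, ← zpow_natCast, ← zpow_mul, ← zpow_mul, ← zpow_add,
      ← Nat.gcd_eq_gcd_ab, hmn.gcd_eq_one, Nat.cast_one, zpow_one]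
  rw [hg]
  exact H.mul_mem (H.zpow_mem hm _) (H.zpow_mem hn _)

section IsBaseNorm

variable {k L F : Type} [Field k] [Field L] [Field F] [Algebra k L] [Algebra k F]

theorem isBaseNorm_iff (β : k) :
    IsBaseNorm k L F β ↔ ∃ y : (F ⊗[k] L)ˣ, Algebra.norm F (y : F ⊗[k] L) = algebraMap k F β := by
  let _ : Algebra F (L ⊗[k] F) :=
    (Algebra.TensorProduct.includeRight (R := k) (A := L) (B := F)).toRingHom.toAlgebra
  let e : L ⊗[k] F ≃ₐ[F] F ⊗[k] L :=
    .ofRingEquiv (f := (Algebra.TensorProduct.comm k L F).toRingEquiv) fun _ => rfl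
  exact (Units.mapEquiv e.toMulEquiv).exists_congr fun x => by
    rw [← Algebra.norm_eq_of_algEquiv e]; rfl

variable (k L) in
theorem isBaseNorm_self_iff (β : kˣ) :
    IsBaseNorm k L k β ↔ β ∈ (Units.map (Algebra.norm k : L →* k)).range := by
  rw [isBaseNorm_iff]
  let e := Algebra.TensorProduct.lid k L
  refine (Units.mapEquiv e.toMulEquiv).exists_congr fun x => ?_
  rw [← Algebra.norm_eq_of_algEquiv e, Units.ext_iff]
  rfl

theorem IsBaseNorm.pow_finrank_mem_range_norm {β : kˣ} (h : IsBaseNorm k L F β) :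
    β ^ finrank k F ∈ (Units.map (Algebra.norm k : L →* k)).range := by
  obtain ⟨y, hy⟩ := (isBaseNorm_iff _).mp h
  let x := Units.map (Algebra.TensorProduct.comm k F L).toMulEquiv.toMonoidHom y
  refine ⟨Units.map (Algebra.norm L) x, Units.ext ?_⟩
  calc Algebra.norm k (Algebra.norm L (x : L ⊗[k] F))
      = Algebra.norm k (y : F ⊗[k] L) := by
        rw [Algebra.norm_norm]; exact Algebra.norm_eq_of_algEquiv _ _
    _ = β ^ finrank k F := by rw [← Algebra.norm_norm (S := F), hy, Algebra.norm_algebraMap]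

end IsBaseNorm

theorem stmt11 (k L : Type) [Field k] [Field L] [Algebra k L]
    [FiniteDimensional k L] [Algebra.IsSeparable k L]
    (p : ℕ) (hp : p.Prime) (hd : Module.finrank k L = p) (β : kˣ) :
    ∃ (F : Type) (_ : Field F) (_ : Algebra k F),
      FiniteDimensional k F ∧ Algebra.IsSeparable k F ∧
      (Module.finrank k F = 1 ∨ Module.finrank k F = p) ∧
      IsBaseNorm k L F (β : k) ∧
      ∀ (F' : Type) (_ : Field F') (_ : Algebra k F'),
        FiniteDimensional k F' → Algebra.IsSeparable k F' →
        IsBaseNorm k L F' (β : k) →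
        Module.finrank k F ∣ Module.finrank k F' := by
  set N := (Units.map (Algebra.norm k : L →* k)).range
  by_cases hβ : β ∈ N
  · refine ⟨k, inferInstance, inferInstance, inferInstance, inferInstance,
      .inl (finrank_self k), (isBaseNorm_self_iff k L β).mpr hβ, fun _ _ _ _ _ _ => (finrank_self k).symm ▸ one_dvd _⟩
  refine ⟨L, inferInstance, inferInstance, inferInstance, inferInstance, .inr hd, ?_,
    fun F' _ _ _ _ hF' => ?_⟩
  · rw [isBaseNorm_iff]
    exact exists_norm_tensorProduct_self_eq (Units.map (algebraMap k L : k →* L) β)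
  · rw [hd]
    by_contra hpF'
    have hpN : β ^ p ∈ N := ⟨Units.map (algebraMap k L : k →* L) β, Units.ext <| by simp [hd]⟩
    exact hβ <| N.mem_of_pow_mem_of_coprime ((Nat.Prime.coprime_iff_not_dvd hp).mpr hpF')
      hpN hF'.pow_finrank_mem_range_norm
end

section
/- Let k be a field with separable closure k^s, let L/k be a finite separable field extension of degree 6, and let K₁, K₂ be intermediate fields of L/k with [L:K₁] = 2, [K₁:k] = 3, [L:K₂] = 3, [K₂:k] = 2. Let σ be the nontrivial K₁-automorphism of L. Then for every unit β of L ⊗_k k^s satisfying N_{(L⊗_k k^s)/(K₁⊗_k k^s)}(β) = 1 and N_{(L⊗_k k^s)/(K₂⊗_k k^s)}(β) = 1, there exists a unit α of L ⊗_k k^s such that N_{(L⊗_k k^s)/(K₂⊗_k k^s)}(α) = 1 and (σ ⊗ id)(α) · α⁻¹ = β. -/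
/-!
Over a separable closure everything splits: `X ⊗[k] kˢ` is the ring of `kˢ`-valued functions on
`Hom_k(X, kˢ)`, naturally in `X`. Under this identification the norm to `K ⊗[k] kˢ` is the
product over the fibres of restriction `Hom_k(L, kˢ) → Hom_k(K, kˢ)`, and `σ ⊗ id` is
precomposition `P` with `σ`. `P` is a fixed-point-free involution whose orbits are the
two-element fibres over `Hom_k(K₁, kˢ)`, and since `K₁ ⊔ K₂ = L` it swaps the two fibres over
`Hom_k(K₂, kˢ)`. So `β` becomes a function `x` with `x f * x (P f) = 1` and product `1` on each
`K₂`-fibre, and `y := 1` on one `K₂`-fibre, `y := x ∘ P` on the other, satisfies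
`y ∘ P = x * y` and has `K₂`-norm `1`.
-/

open TensorProduct Finset

theorem Algebra.norm_pi_self {A κ : Type*} [CommRing A] [Fintype κ] [DecidableEq κ] (y : κ → A) :
    Algebra.norm A y = ∏ a, y a := by
  rw [Algebra.norm_eq_matrix_det (Pi.basisFun A κ)]
  have : Algebra.leftMulMatrix (Pi.basisFun A κ) y = Matrix.diagonal y := by
    ext a b
    simp [Algebra.leftMulMatrix_eq_repr_mul, Matrix.diagonal_apply, Pi.single_apply]
  rw [this, Matrix.det_diagonal]

theorem exists_equiv_prod_fin_of_card_fiber {ι ι' : Type*} [Fintype ι] [DecidableEq ι']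
    (r : ι → ι') {m : ℕ} (hr : ∀ g, #{i | r i = g} = m) :
    ∃ c : ι ≃ ι' × Fin m, ∀ i, (c i).1 = r i := by
  have e : ∀ g, {i // r i = g} ≃ Fin m := fun g =>
    Fintype.equivFinOfCardEq ((Fintype.card_subtype _).trans (hr g))
  exact ⟨(Equiv.sigmaFiberEquiv r).symm.trans
    ((Equiv.sigmaCongrRight e).trans (Equiv.sigmaEquivProd ι' (Fin m))), fun i => rfl⟩

theorem Algebra.norm_pi_apply_eq_prod_fiber {R ι ι' : Type*} [CommRing R] [Fintype ι]
    [DecidableEq ι'] [Algebra (ι' → R) (ι → R)] (r : ι → ι')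
    (halg : ∀ v, algebraMap (ι' → R) (ι → R) v = v ∘ r) {m : ℕ} (hr : ∀ g, #{i | r i = g} = m)
    (x : ι → R) (g : ι') :
    Algebra.norm (ι' → R) x g = ∏ i with r i = g, x i := by
  obtain ⟨c, hc⟩ := exists_equiv_prod_fin_of_card_fiber r hr
  -- `c` makes `ι → R` the free `(ι' → R)`-module `Fin m → (ι' → R)`, on which `x` acts diagonally.
  let e : (ι → R) ≃+* (Fin m → ι' → R) :=
    { toFun := fun x a g => x (c.symm (g, a))
      invFun := fun y i => y (c i).2 (c i).1
      left_inv := fun x => by simp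
      right_inv := fun y => by simp
      map_mul' := fun _ _ => rfl
      map_add' := fun _ _ => rfl }
  have he : (algebraMap (ι' → R) (Fin m → ι' → R)).comp (RingEquiv.refl _).toRingHom =
      e.toRingHom.comp (algebraMap (ι' → R) (ι → R)) := by
    ext v a g
    simp [e, halg, ← hc]
  rw [Algebra.norm_eq_of_equiv_equiv (RingEquiv.refl _) e he, Algebra.norm_pi_self]
  show (∏ a, e x a) g = _
  rw [Finset.prod_apply]
  refine Finset.prod_nbij' (fun a => c.symm (g, a)) (fun i => (c i).2) ?_ ?_ ?_ ?_ fun _ _ => rfl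
  · simp [← hc]
  · simp
  · simp
  · intro i hi
    obtain rfl : r i = g := by simpa using hi
    simp [← hc]

section Splitting

variable (k ks X : Type*) [Field k] [Field ks] [Algebra k ks] [Field X] [Algebra k X]

noncomputable def evalEmbeddings : ks ⊗[k] X →ₐ[ks] ((X →ₐ[k] ks) → ks) :=
  Algebra.TensorProduct.lift (Algebra.ofId ks _) (AlgHom.pi fun f => f)
    fun _ _ => Commute.all _ _

variable {k ks X} in
@[simp]
theorem evalEmbeddings_tmul (s : ks) (x : X) :
    evalEmbeddings k ks X (s ⊗ₜ x) = fun f => s * f x := by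
  funext f
  simp [evalEmbeddings, Algebra.ofId_apply, Algebra.algebraMap_eq_smul_one]

variable [IsSepClosed ks] [FiniteDimensional k X] [Algebra.IsSeparable k X]

theorem card_algHom_eq_finrank : Fintype.card (X →ₐ[k] ks) = Module.finrank k X :=
  AlgHom.card_of_splits k X ks fun x =>
    IsSepClosed.splits_codomain _ (Algebra.IsSeparable.isSeparable k x)

theorem evalEmbeddings_bijective : Function.Bijective (evalEmbeddings k ks X) := by
  let φ := (evalEmbeddings k ks X).toLinearMap
  have hli : LinearIndependent ks (fun f : X →ₐ[k] ks => (f : X → ks)) :=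
    (linearIndependent_monoidHom X ks).comp (fun f : X →ₐ[k] ks => (f : X →* ks))
      fun f g h => AlgHom.ext fun x => DFunLike.congr_fun h x
  have hsurj : Function.Surjective φ := by
    rw [← LinearMap.range_eq_top, eq_top_iff, ← span_flip_eq_top_iff_linearIndependent.mpr hli,
      Submodule.span_le]
    rintro _ ⟨x, rfl⟩
    exact ⟨1 ⊗ₜ x, by ext; simp [φ, flip]⟩
  have hrank : Module.finrank ks (ks ⊗[k] X) = Module.finrank ks ((X →ₐ[k] ks) → ks) := by
    rw [Module.finrank_baseChange, Module.finrank_fintype_fun_eq_card, card_algHom_eq_finrank]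
  exact ⟨(LinearMap.injective_iff_surjective_of_finrank_eq_finrank hrank).mpr hsurj, hsurj⟩

noncomputable def tensorEquivPiEmbeddings : X ⊗[k] ks ≃+* ((X →ₐ[k] ks) → ks) :=
  (Algebra.TensorProduct.comm k X ks).toRingEquiv.trans
    (RingEquiv.ofBijective (evalEmbeddings k ks X) (evalEmbeddings_bijective k ks X))

variable {k ks X}

@[simp]
theorem tensorEquivPiEmbeddings_tmul (x : X) (s : ks) :
    tensorEquivPiEmbeddings k ks X (x ⊗ₜ s) = fun f => s * f x :=
  evalEmbeddings_tmul s x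

theorem tensorEquivPiEmbeddings_map {Y : Type*} [Field Y] [Algebra k Y] [FiniteDimensional k Y]
    [Algebra.IsSeparable k Y] (j : X →ₐ[k] Y) (z : X ⊗[k] ks) :
    tensorEquivPiEmbeddings k ks Y (Algebra.TensorProduct.map j (AlgHom.id k ks) z) =
      tensorEquivPiEmbeddings k ks X z ∘ fun f => f.comp j := by
  induction z with
  | zero => simp
  | add z w hz hw => simp only [map_add, hz, hw]; rfl
  | tmul x s => funext f; simp

end Splitting

section IntermediateField

variable {k ks L : Type*} [Field k] [Field ks] [Algebra k ks] [IsSepClosed ks] [Field L]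
  [Algebra k L] [FiniteDimensional k L] [Algebra.IsSeparable k L]

open scoped Classical in
theorem card_filter_comp_val_eq_finrank (K : IntermediateField k L) (g : K →ₐ[k] ks) :
    #{f : L →ₐ[k] ks | f.comp K.val = g} = Module.finrank K L := by
  let : Algebra K ks := g.toAlgebra
  have : IsScalarTower k K ks := IsScalarTower.of_algebraMap_eq fun c => (g.commutes c).symm
  rw [← Fintype.card_subtype, ← card_algHom_eq_finrank K ks L]
  exact Fintype.card_congr
    { toFun := fun f => { toRingHom := f.1, commutes' := fun c => DFunLike.congr_fun f.2 c }
      invFun := fun f => ⟨f.restrictScalars k, AlgHom.ext f.commutes⟩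
      left_inv := fun _ => rfl
      right_inv := fun _ => rfl }

open scoped Classical in
theorem tensorEquivPiEmbeddings_norm (K : IntermediateField k L) (z : L ⊗[k] ks)
    (g : K →ₐ[k] ks) :
    letI : Algebra (K ⊗[k] ks) (L ⊗[k] ks) :=
      (Algebra.TensorProduct.map K.val (AlgHom.id k ks)).toRingHom.toAlgebra
    tensorEquivPiEmbeddings k ks K (Algebra.norm (K ⊗[k] ks) z) g =
      ∏ f with f.comp K.val = g, tensorEquivPiEmbeddings k ks L z f := by
  let : Algebra (K ⊗[k] ks) (L ⊗[k] ks) :=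
    (Algebra.TensorProduct.map K.val (AlgHom.id k ks)).toRingHom.toAlgebra
  let : Algebra ((K →ₐ[k] ks) → ks) ((L →ₐ[k] ks) → ks) :=
    (RingHom.pi fun f => Pi.evalRingHom _ (f.comp K.val)).toAlgebra
  rw [Algebra.norm_eq_of_equiv_equiv (tensorEquivPiEmbeddings k ks K)
    (tensorEquivPiEmbeddings k ks L)
    (RingHom.ext fun z => (tensorEquivPiEmbeddings_map K.val z).symm),
    RingEquiv.apply_symm_apply]
  exact Algebra.norm_pi_apply_eq_prod_fiber _ (fun _ => rfl) (card_filter_comp_val_eq_finrank K) _ g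

open scoped Classical in
theorem tensorEquivPiEmbeddings_norm_eq_mul {K : IntermediateField k L}
    (hK : Module.finrank K L = 2) (z : L ⊗[k] ks) {f f' : L →ₐ[k] ks} (hne : f ≠ f')
    (hff' : f'.comp K.val = f.comp K.val) :
    letI : Algebra (K ⊗[k] ks) (L ⊗[k] ks) :=
      (Algebra.TensorProduct.map K.val (AlgHom.id k ks)).toRingHom.toAlgebra
    tensorEquivPiEmbeddings k ks K (Algebra.norm (K ⊗[k] ks) z) (f.comp K.val) =
      tensorEquivPiEmbeddings k ks L z f * tensorEquivPiEmbeddings k ks L z f' := by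
  have hfib : {f, f'} = ({g | g.comp K.val = f.comp K.val} : Finset (L →ₐ[k] ks)) := by
    refine eq_of_subset_of_card_le ?_ ?_
    · simp [insert_subset_iff, hff']
    · rw [card_filter_comp_val_eq_finrank, hK, card_pair hne]
  rw [tensorEquivPiEmbeddings_norm, ← hfib, prod_pair hne]

end IntermediateField

theorem exists_comp_eq_mul_of_prod_fiber_eq_one {M ι ι' : Type*} [CommMonoid M] [Fintype ι]
    [DecidableEq ι'] (hι' : Nat.card ι' = 2) (r : ι → ι') {P : ι → ι}
    (hP : Function.Involutive P) (hrP : ∀ i, r (P i) ≠ r i) (x : ι → M)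
    (hx : ∀ i, x i * x (P i) = 1) (hxr : ∀ g, ∏ i with r i = g, x i = 1) :
    ∃ y : ι → M, IsUnit y ∧ (∀ g, ∏ i with r i = g, y i = 1) ∧ ∀ i, y (P i) = x i * y i := by
  obtain ⟨g₀, g₁, hne, huniv⟩ := Nat.card_eq_two_iff.mp hι'
  have hg : ∀ g, g = g₀ ∨ g = g₁ := fun g => by simpa using huniv.ge (Set.mem_univ g)
  have hswap : ∀ i, r (P i) = g₀ ↔ r i ≠ g₀ := fun i => by
    rcases hg (r i) with h | h <;> rcases hg (r (P i)) with h' | h' <;> grind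
  let y i := if r i = g₀ then 1 else x (P i)
  refine ⟨y, Pi.isUnit_iff.mpr fun i => ?_, fun g => ?_, fun i => ?_⟩
  · by_cases h : r i = g₀
    · simp [y, h]
    · simpa [y, h] using IsUnit.of_mul_eq_one _ (by simpa [hP i] using hx (P i))
  · rcases hg g with rfl | rfl
    · exact prod_eq_one fun i hi => if_pos (mem_filter.mp hi).2
    · rw [← hxr g₀]
      refine prod_nbij' P P (fun i hi => ?_) (fun i hi => ?_) (fun i _ => hP i) (fun i _ => hP i)
        (fun i hi => ?_) <;> simp only [mem_filter, mem_univ, true_and] at hi ⊢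
      · exact (hswap i).mpr (hi ▸ hne.symm)
      · rcases hg (r (P i)) with h | h
        · exact absurd (h.trans hi.symm) (hrP i)
        · exact h
      · simp [y, hi ▸ hne.symm]
  · by_cases h : r i = g₀
    · simp [y, h, h ▸ hrP i, hP i]
    · simp [y, h, (hswap i).mpr h, hx]

theorem AlgEquiv.mul_self_eq_one_of_finrank_eq_two {K L : Type*} [Field K] [Field L]
    [Algebra K L] [Algebra.IsSeparable K L] (h : Module.finrank K L = 2) (σ : L ≃ₐ[K] L) :
    σ * σ = 1 := by
  have : Algebra.IsQuadraticExtension K L := ⟨h⟩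
  have : FiniteDimensional K L := Module.finite_of_finrank_eq_succ h
  rw [← pow_two, ← h, ← IsGalois.card_aut_eq_finrank, Nat.card_eq_fintype_card]
  exact pow_card_eq_one

theorem IntermediateField.sup_eq_top_of_finrank_coprime {k L : Type*} [Field k] [Field L]
    [Algebra k L] [FiniteDimensional k L] {K₁ K₂ : IntermediateField k L}
    (hcop : (Module.finrank k K₁).Coprime (Module.finrank k K₂))
    (hL : Module.finrank k K₁ * Module.finrank k K₂ = Module.finrank k L) : K₁ ⊔ K₂ = ⊤ :=
  eq_of_le_of_finrank_eq le_top <| by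
    rw [(LinearDisjoint.of_finrank_coprime hcop).finrank_sup, hL, finrank_top']

theorem IntermediateField.algHom_ext_of_sup_eq_top {k L M : Type*} [Field k] [Field L]
    [Algebra k L] [FiniteDimensional k L] [Ring M] [Algebra k M] {K₁ K₂ : IntermediateField k L}
    (hsup : K₁ ⊔ K₂ = ⊤) {φ ψ : L →ₐ[k] M} (h₁ : φ.comp K₁.val = ψ.comp K₁.val)
    (h₂ : φ.comp K₂.val = ψ.comp K₂.val) : φ = ψ := by
  refine AlgHom.ext_of_adjoin_eq_top (s := K₁ ∪ K₂) ?_ ?_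
  · have := congrArg toSubalgebra hsup
    rwa [sup_toSubalgebra_of_left, top_toSubalgebra, Algebra.sup_def] at this
  · rintro x (hx | hx)
    · exact DFunLike.congr_fun h₁ ⟨x, hx⟩
    · exact DFunLike.congr_fun h₂ ⟨x, hx⟩

section Conjugation

variable {k ks L : Type*} [Field k] [Field ks] [Field L] [Algebra k ks] [Algebra k L]
  {K₁ : IntermediateField k L}

theorem comp_restrictScalars_comp_val (σ : L ≃ₐ[K₁] L) (f : L →ₐ[k] ks) :
    (f.comp (σ.toAlgHom.restrictScalars k)).comp K₁.val = f.comp K₁.val := by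
  rw [AlgHom.comp_assoc]
  exact congrArg f.comp (AlgHom.ext σ.commutes)

theorem comp_restrictScalars_ne {σ : L ≃ₐ[K₁] L} (hσ : σ ≠ AlgEquiv.refl) (f : L →ₐ[k] ks) :
    f.comp (σ.toAlgHom.restrictScalars k) ≠ f := fun h =>
  hσ <| AlgEquiv.ext fun x => DFunLike.congr_fun
    ((AlgHom.cancel_left f.toRingHom.injective).mp (h.trans f.comp_id.symm)) x

theorem comp_restrictScalars_involutive [Algebra.IsSeparable K₁ L]
    (hK₁ : Module.finrank K₁ L = 2) (σ : L ≃ₐ[K₁] L) :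
    Function.Involutive fun f : L →ₐ[k] ks => f.comp (σ.toAlgHom.restrictScalars k) :=
  fun f => AlgHom.ext fun x => by
    simpa using congrArg f (DFunLike.congr_fun (AlgEquiv.mul_self_eq_one_of_finrank_eq_two hK₁ σ) x)

theorem comp_restrictScalars_comp_val_ne [FiniteDimensional k L] {K₂ : IntermediateField k L}
    (hsup : K₁ ⊔ K₂ = ⊤) {σ : L ≃ₐ[K₁] L} (hσ : σ ≠ AlgEquiv.refl) (f : L →ₐ[k] ks) :
    (f.comp (σ.toAlgHom.restrictScalars k)).comp K₂.val ≠ f.comp K₂.val := fun h =>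
  hσ <| AlgEquiv.ext fun x => DFunLike.congr_fun (IntermediateField.algHom_ext_of_sup_eq_top hsup
    (φ := σ.toAlgHom.restrictScalars k) (ψ := AlgHom.id k L) (AlgHom.ext σ.commutes)
    ((AlgHom.cancel_left f.toRingHom.injective).mp (by rwa [← AlgHom.comp_assoc]))) x

end Conjugation

theorem stmt14_general (k ks L : Type) [Field k] [Field ks] [Field L]
    [Algebra k ks] [IsSepClosure k ks] [Algebra k L]
    [FiniteDimensional k L] [Algebra.IsSeparable k L]
    (hdeg : Module.finrank k L = 6)
    (K₁ K₂ : IntermediateField k L)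
    (h1 : Module.finrank (↥K₁) L = 2) (h2 : Module.finrank k (↥K₁) = 3)
    (h4 : Module.finrank k (↥K₂) = 2)
    (σ : L ≃ₐ[↥K₁] L) (hσ : σ ≠ AlgEquiv.refl) :
    letI : Algebra ((↥K₁) ⊗[k] ks) (L ⊗[k] ks) :=
      ((Algebra.TensorProduct.map K₁.val (AlgHom.id k ks)).toRingHom).toAlgebra
    letI : Algebra ((↥K₂) ⊗[k] ks) (L ⊗[k] ks) :=
      ((Algebra.TensorProduct.map K₂.val (AlgHom.id k ks)).toRingHom).toAlgebra
    ∀ β : (L ⊗[k] ks)ˣ,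
      Algebra.norm ((↥K₁) ⊗[k] ks) (β : L ⊗[k] ks) = 1 →
      Algebra.norm ((↥K₂) ⊗[k] ks) (β : L ⊗[k] ks) = 1 →
      ∃ α : (L ⊗[k] ks)ˣ,
        Algebra.norm ((↥K₂) ⊗[k] ks) (α : L ⊗[k] ks) = 1 ∧
        (Algebra.TensorProduct.map (AlgHom.restrictScalars k σ.toAlgHom) (AlgHom.id k ks))
            (α : L ⊗[k] ks) * ((α⁻¹ : (L ⊗[k] ks)ˣ) : L ⊗[k] ks)
          = (β : L ⊗[k] ks) := by
  classical
  intro β hβ₁ hβ₂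
  have : IsSepClosed ks := IsSepClosure.sep_closed k
  set E := tensorEquivPiEmbeddings k ks L
  let P (f : L →ₐ[k] ks) := f.comp (σ.toAlgHom.restrictScalars k)
  have hsup : K₁ ⊔ K₂ = ⊤ := IntermediateField.sup_eq_top_of_finrank_coprime
    (by rw [h2, h4]; decide) (by rw [h2, h4, hdeg])
  have hpair : ∀ f, E β f * E β (P f) = 1 := fun f => by
    rw [← tensorEquivPiEmbeddings_norm_eq_mul h1 _ (comp_restrictScalars_ne hσ f).symm
      (comp_restrictScalars_comp_val σ f), hβ₁, map_one, Pi.one_apply]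
  have hnorm₂ : ∀ g, ∏ f with f.comp K₂.val = g, E β f = 1 := fun g => by
    rw [← tensorEquivPiEmbeddings_norm, hβ₂, map_one, Pi.one_apply]
  have hcard : Nat.card (K₂ →ₐ[k] ks) = 2 := by
    rw [Nat.card_eq_fintype_card, card_algHom_eq_finrank, h4]
  obtain ⟨y, hyu, hy₂, hyP⟩ := exists_comp_eq_mul_of_prod_fiber_eq_one hcard _
    (comp_restrictScalars_involutive h1 σ) (comp_restrictScalars_comp_val_ne hsup hσ) _ hpair hnorm₂
  refine ⟨(hyu.map E.symm).unit, ?_, ?_⟩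
  · apply (tensorEquivPiEmbeddings k ks K₂).injective
    funext g
    rw [tensorEquivPiEmbeddings_norm, IsUnit.unit_spec]
    simpa [E] using hy₂ g
  · rw [Units.mul_inv_eq_iff_eq_mul]
    apply E.injective
    rw [tensorEquivPiEmbeddings_map, map_mul]
    funext f
    simpa [E] using hyP f

theorem stmt14 (k ks L : Type) [Field k] [Field ks] [Field L]
    [Algebra k ks] [IsSepClosure k ks] [Algebra k L]
    [FiniteDimensional k L] [Algebra.IsSeparable k L]
    (hdeg : Module.finrank k L = 6)
    (K₁ K₂ : IntermediateField k L)
    (h1 : Module.finrank (↥K₁) L = 2) (h2 : Module.finrank k (↥K₁) = 3)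
    (h3 : Module.finrank (↥K₂) L = 3) (h4 : Module.finrank k (↥K₂) = 2)
    (σ : L ≃ₐ[↥K₁] L) (hσ : σ ≠ AlgEquiv.refl) :
    letI : Algebra ((↥K₁) ⊗[k] ks) (L ⊗[k] ks) :=
      ((Algebra.TensorProduct.map K₁.val (AlgHom.id k ks)).toRingHom).toAlgebra
    letI : Algebra ((↥K₂) ⊗[k] ks) (L ⊗[k] ks) :=
      ((Algebra.TensorProduct.map K₂.val (AlgHom.id k ks)).toRingHom).toAlgebra
    ∀ β : (L ⊗[k] ks)ˣ,
      Algebra.norm ((↥K₁) ⊗[k] ks) (β : L ⊗[k] ks) = 1 →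
      Algebra.norm ((↥K₂) ⊗[k] ks) (β : L ⊗[k] ks) = 1 →
      ∃ α : (L ⊗[k] ks)ˣ,
        Algebra.norm ((↥K₂) ⊗[k] ks) (α : L ⊗[k] ks) = 1 ∧
        (Algebra.TensorProduct.map (AlgHom.restrictScalars k σ.toAlgHom) (AlgHom.id k ks))
            (α : L ⊗[k] ks) * ((α⁻¹ : (L ⊗[k] ks)ˣ) : L ⊗[k] ks)
          = (β : L ⊗[k] ks) :=
  stmt14_general k ks L hdeg K₁ K₂ h1 h2 h4 σ hσ
end
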